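/- Fix n ∈ ℕ and ε ∈ [0, 1/2]. Every probability distribution P on {0,1}^n satisfying the Santha–Vazirani condition with parameter ε lies in the convex hull of the set of permutations of the Bernoulli distribution with parameter p₊ = 1/2 + ε; that is, P is a convex combination of distributions of the form x ↦ B(σ(x)) where σ is a permutation of {0,1}^n and B(x) = (1/2+ε)^{n−w(x)} (1/2−ε)^{w(x)}. -/
import Mathlib


open Finset

/-- Hamming weight of a binary string. -/
def hammingWeight {n : ℕ} (x : Fin n → Bool) : ℕ :=
  (Finset.univ.filter (fun j => x j = true)).card

/-- The Bernoulli distribution with parameter `p₊ = 1/2 + ε` on `{0,1}^n`: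
`B(x) = (1/2+ε)^(n−w(x)) (1/2−ε)^(w(x))`. -/
noncomputable def bern (n : ℕ) (ε : ℝ) (x : Fin n → Bool) : ℝ :=
  (1/2 + ε) ^ (n - hammingWeight x) * (1/2 - ε) ^ (hammingWeight x)

/-- Marginal probability of a prefix `y` of length `i` under `P`. -/
noncomputable def prefMarg {n : ℕ} (P : (Fin n → Bool) → ℝ) {i : ℕ} (h : i ≤ n)
    (y : Fin i → Bool) : ℝ :=
  ∑ x ∈ Finset.univ.filter
      (fun x : Fin n → Bool => ∀ j : Fin i, x (Fin.castLE h j) = y j), P x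

/-- `P` is a probability distribution on `{0,1}^n` satisfying the Santha–Vazirani
condition with parameter `ε`: every conditional probability of the next bit given
a prefix of positive probability lies in `[1/2−ε, 1/2+ε]`. -/
noncomputable def IsSV (n : ℕ) (ε : ℝ) (P : (Fin n → Bool) → ℝ) : Prop :=
  (∀ x, 0 ≤ P x) ∧ (∑ x, P x = 1) ∧
  ∀ (i : ℕ) (hi : i < n) (y : Fin i → Bool),
    0 < prefMarg P hi.le y → ∀ b : Bool,
      1/2 - ε ≤ prefMarg P hi (Fin.snoc y b) / prefMarg P hi.le y ∧
      prefMarg P hi (Fin.snoc y b) / prefMarg P hi.le y ≤ 1/2 + ε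

/-- The set of SV distributions with parameter `ε` on `{0,1}^n`. -/
noncomputable def SVset (n : ℕ) (ε : ℝ) : Set ((Fin n → Bool) → ℝ) :=
  {P | IsSV n ε P}

/-- The `K`-th Ky Fan norm of `Q` : the sum of the `K` largest values of `Q`
(with multiplicity), i.e. the maximal sum of `Q` over subsets of cardinality `K`. -/
noncomputable def kyFan {Z : Type*} [Fintype Z] (K : ℕ) (Q : Z → ℝ) : ℝ :=
  sSup ((fun S : Finset Z => ∑ z ∈ S, Q z) '' {S : Finset Z | S.card = K})

lemma hammingWeight_le {n : ℕ} (x : Fin n → Bool) : hammingWeight x ≤ n := by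
  classical
  calc (Finset.univ.filter (fun j => x j = true)).card ≤ (Finset.univ : Finset (Fin n)).card :=
        Finset.card_filter_le _ _
    _ = n := by simp

lemma hammingWeight_cons {n : ℕ} (b : Bool) (x : Fin n → Bool) :
    hammingWeight (Fin.cons b x) = (cond b 1 0) + hammingWeight x := by
  classical
  simp only [hammingWeight, Finset.card_filter]
  rw [Fin.sum_univ_succ]
  cases b <;> simp

lemma bern_cons {n : ℕ} (ε : ℝ) (b : Bool) (x : Fin n → Bool) :
    bern (n+1) ε (Fin.cons b x) = (cond b (1/2 - ε) (1/2 + ε)) * bern n ε x := by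
  have hw := hammingWeight_le x
  cases b <;>
    simp only [bern, hammingWeight_cons, cond] <;>
    [skip; skip]
  · have : n + 1 - (0 + hammingWeight x) = (n - hammingWeight x) + 1 := by omega
    rw [this]; ring
  · have : n + 1 - (1 + hammingWeight x) = n - hammingWeight x := by omega
    rw [this]; ring

lemma sum_cons_decomp {n : ℕ} {M : Type*} [AddCommMonoid M] (f : (Fin (n+1) → Bool) → M) :
    ∑ x, f x = (∑ x' : Fin n → Bool, f (Fin.cons false x')) +
               (∑ x' : Fin n → Bool, f (Fin.cons true x')) := by
  classical
  rw [← Equiv.sum_comp (Fin.consEquiv (fun _ => Bool)) f]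
  rw [Fintype.sum_prod_type]
  rw [Fintype.sum_bool]
  simp [Fin.consEquiv]
  exact add_comm _ _

lemma prefMarg_zero {n : ℕ} (P : (Fin n → Bool) → ℝ) (h : 0 ≤ n) (y : Fin 0 → Bool) :
    prefMarg P h y = ∑ x, P x := by
  unfold prefMarg
  congr 1
  rw [Finset.filter_true_of_mem]
  intro x _ j
  exact j.elim0

lemma prefCond_cons {n i : ℕ} (h : i + 1 ≤ n + 1) (b b' : Bool)
    (y : Fin i → Bool) (x' : Fin n → Bool) :
    (∀ j : Fin (i+1), (Fin.cons b' x' : Fin (n+1) → Bool) (Fin.castLE h j) = (Fin.cons b y : Fin (i+1) → Bool) j)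
    ↔ (b' = b ∧ ∀ j : Fin i, x' (Fin.castLE (Nat.succ_le_succ_iff.mp h) j) = y j) := by
  constructor
  · intro H
    constructor
    · have h0 := H 0
      simpa using h0
    · intro j
      have hj := H j.succ
      rw [Fin.castLE_succ] at hj
      simpa using hj
  · rintro ⟨rfl, H⟩ j
    induction j using Fin.cases with
    | zero => simp
    | succ k =>
      rw [Fin.castLE_succ]
      simpa using H k

lemma prefMarg_cons {n i : ℕ} (P : (Fin (n+1) → Bool) → ℝ) (h : i + 1 ≤ n + 1)
    (b : Bool) (y : Fin i → Bool) :
    prefMarg P h (Fin.cons b y) =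
      ∑ x' ∈ Finset.univ.filter
        (fun x' : Fin n → Bool => ∀ j : Fin i, x' (Fin.castLE (Nat.succ_le_succ_iff.mp h) j) = y j),
        P (Fin.cons b x') := by
  classical
  unfold prefMarg
  rw [Finset.sum_filter, Finset.sum_filter]
  calc ∑ x : Fin (n+1) → Bool,
        (if ∀ j : Fin (i+1), x (Fin.castLE h j) = (Fin.cons b y : Fin (i+1) → Bool) j then P x else 0)
      = (∑ x' : Fin n → Bool, if ∀ j : Fin (i+1),
            (Fin.cons false x' : Fin (n+1) → Bool) (Fin.castLE h j) = (Fin.cons b y : Fin (i+1) → Bool) j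
            then P (Fin.cons false x') else 0) +
        (∑ x' : Fin n → Bool, if ∀ j : Fin (i+1),
            (Fin.cons true x' : Fin (n+1) → Bool) (Fin.castLE h j) = (Fin.cons b y : Fin (i+1) → Bool) j
            then P (Fin.cons true x') else 0) := by
        rw [← Equiv.sum_comp (Fin.consEquiv (fun _ => Bool))
          (fun x => if ∀ j : Fin (i+1), x (Fin.castLE h j) = (Fin.cons b y : Fin (i+1) → Bool) j then P x else 0)]
        rw [Fintype.sum_prod_type, Fintype.sum_bool]
        simp only [Fin.consEquiv]
        exact add_comm _ _
    _ = _ := by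
        simp only [prefCond_cons h b]
        cases b <;> simp

/-- snoc of the empty tuple is a constant tuple = cons. -/
lemma snoc_zero_eq_cons (y : Fin 0 → Bool) (b : Bool) :
    (Fin.snoc y b : Fin 1 → Bool) = Fin.cons b y := by
  funext j
  fin_cases j
  simp [Fin.snoc, Fin.cons]

noncomputable def condL {n : ℕ} (a c : ℝ) :
    ((Fin n → Bool) → ℝ) × ((Fin n → Bool) → ℝ) →ₗ[ℝ] ((Fin (n+1) → Bool) → ℝ) where
  toFun := fun AC x => if x 0 then c * AC.2 (Fin.tail x) else a * AC.1 (Fin.tail x)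
  map_add' := by
    intro A B
    funext x
    by_cases hx : x 0 <;> simp [hx] <;> ring
  map_smul' := by
    intro r A
    funext x
    by_cases hx : x 0 <;> simp [hx] <;> ring

/-- The combined permutation. -/
def combPerm {n : ℕ} (d : Bool) (σ τ : Equiv.Perm (Fin n → Bool)) :
    Equiv.Perm (Fin (n+1) → Bool) where
  toFun := fun x => Fin.cons (xor d (x 0)) ((cond (x 0) τ σ) (Fin.tail x))
  invFun := fun z => Fin.cons (xor d (z 0)) ((cond (xor d (z 0)) τ.symm σ.symm) (Fin.tail z))
  left_inv := by
    intro x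
    cases d <;> rcases hx : x 0 <;>
      simp [hx, Fin.tail_cons] <;>
      rw [← hx, Fin.cons_self_tail]
  right_inv := by
    intro z
    cases d <;> rcases hz : z 0 <;>
      simp [hz, Fin.tail_cons] <;>
      rw [← hz, Fin.cons_self_tail]

noncomputable def permBern (n : ℕ) (ε : ℝ) : Set ((Fin n → Bool) → ℝ) :=
  {Q | ∃ σ : Equiv.Perm (Fin n → Bool), ∀ x, Q x = bern n ε (σ x)}

lemma condL_mem {n : ℕ} (ε : ℝ) (d : Bool) (A C : (Fin n → Bool) → ℝ)
    (hA : A ∈ permBern n ε) (hC : C ∈ permBern n ε) :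
    condL (cond d (1/2 - ε) (1/2 + ε)) (cond d (1/2 + ε) (1/2 - ε)) (A, C)
      ∈ permBern (n+1) ε := by
  obtain ⟨σ, hσ⟩ := hA
  obtain ⟨τ, hτ⟩ := hC
  refine ⟨combPerm d σ τ, fun x => ?_⟩
  cases d <;> rcases hx : x 0 <;>
    simp [condL, combPerm, bern_cons, hx, hσ, hτ]

theorem sv_aux : ∀ (n : ℕ) (ε : ℝ), 0 ≤ ε → ε ≤ 1/2 → ∀ P : (Fin n → Bool) → ℝ,
    IsSV n ε P → P ∈ convexHull ℝ (permBern n ε) := by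
  intro n
  induction n with
  | zero =>
    intro ε hε0 hε P hP
    apply subset_convexHull
    refine ⟨Equiv.refl _, fun x => ?_⟩
    have h1 : ∑ z : Fin 0 → Bool, P z = P x := Fintype.sum_subsingleton _ x
    have h2 : P x = 1 := by rw [← h1]; exact hP.2.1
    have h3 : hammingWeight x = 0 := by simp [hammingWeight]
    simp [h2, bern, h3]
  | succ n IH =>
    intro ε hε0 hε P hP
    obtain ⟨hpos, hsum, hsv⟩ := hP
    classical
    set m : Bool → ℝ := fun b => ∑ x' : Fin n → Bool, P (Fin.cons b x') with hm_def
    have hm_nonneg : ∀ b, 0 ≤ m b := fun b => Finset.sum_nonneg (fun _ _ => hpos _)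
    have hm_sum : m false + m true = 1 := by
      rw [← hsum]; exact (sum_cons_decomp P).symm
    have hm_eq : ∀ (h : 0 + 1 ≤ n + 1) (b : Bool) (y : Fin 0 → Bool),
        prefMarg P h (Fin.cons b y) = m b := by
      intro h b y
      rw [prefMarg_cons]
      rw [Finset.filter_true_of_mem (fun x _ => fun j => j.elim0)]
    have hm_bound : ∀ b, 1/2 - ε ≤ m b ∧ m b ≤ 1/2 + ε := by
      intro b
      have h0 : (0:ℕ) < n + 1 := Nat.succ_pos n
      have hpos0 : 0 < prefMarg P h0.le (fun j : Fin 0 => j.elim0) := by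
        rw [prefMarg_zero, hsum]; norm_num
      have hb := hsv 0 h0 (fun j : Fin 0 => j.elim0) hpos0 b
      rw [prefMarg_zero P h0.le, hsum, div_one, snoc_zero_eq_cons,
        hm_eq h0 b] at hb
      exact hb
    set Q : Bool → ((Fin n → Bool) → ℝ) := fun b =>
      if 0 < m b then (fun x' => P (Fin.cons b x') / m b) else bern n ε with hQ_def
    have hkey : ∀ (b : Bool) (k : ℕ) (hk : k ≤ n) (z : Fin k → Bool),
        prefMarg (fun x' => P (Fin.cons b x') / m b) hk z =
          prefMarg P (Nat.succ_le_succ hk) (Fin.cons b z) / m b := by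
      intro b k hk z
      rw [prefMarg_cons P (Nat.succ_le_succ hk) b z]
      unfold prefMarg
      rw [Finset.sum_div]
    have hQ_mem : ∀ b, Q b ∈ convexHull ℝ (permBern n ε) := by
      intro b
      by_cases hb : 0 < m b
      · simp only [hQ_def]
        rw [if_pos hb]
        apply IH ε hε0 hε
        refine ⟨fun x' => div_nonneg (hpos _) hb.le, ?_, ?_⟩
        · rw [← Finset.sum_div]
          exact div_self hb.ne'
        · intro i hi y hy c
          rw [hkey b i hi.le y] at hy
          have hPy : 0 < prefMarg P (Nat.succ_le_succ hi.le) (Fin.cons b y) := by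
            by_contra hcon
            push_neg at hcon
            have : prefMarg P (Nat.succ_le_succ hi.le) (Fin.cons b y) / m b ≤ 0 :=
              div_nonpos_of_nonpos_of_nonneg hcon (hm_nonneg b)
            linarith
          have e1 : prefMarg (fun x' => P (Fin.cons b x') / m b) hi (Fin.snoc y c)
              = prefMarg P (Nat.succ_lt_succ hi) (Fin.snoc (Fin.cons b y) c) / m b := by
            rw [hkey b (i+1) hi (Fin.snoc y c), Fin.cons_snoc_eq_snoc_cons]
          have e2 : prefMarg (fun x' => P (Fin.cons b x') / m b) hi.le y
              = prefMarg P (Nat.succ_le_succ hi.le) (Fin.cons b y) / m b := hkey b i hi.le y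
          rw [e1, e2, div_div_div_cancel_right₀ hb.ne']
          exact hsv (i+1) (Nat.succ_lt_succ hi) (Fin.cons b y) hPy c
      · simp only [hQ_def]
        rw [if_neg hb]
        exact subset_convexHull ℝ _ ⟨Equiv.refl _, fun x => rfl⟩
    have hdecomp : ∀ x, P x = m (x 0) * Q (x 0) (Fin.tail x) := by
      intro x
      by_cases hb : 0 < m (x 0)
      · simp only [hQ_def, if_pos hb]
        rw [Fin.cons_self_tail, mul_comm, div_mul_cancel₀ _ hb.ne']
      · have hm0 : m (x 0) = 0 := le_antisymm (not_lt.mp hb) (hm_nonneg _)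
        have hle : P x ≤ m (x 0) := by
          have h5 := Finset.single_le_sum (f := fun x' => P (Fin.cons (x 0) x'))
            (fun i _ => hpos _) (Finset.mem_univ (Fin.tail x))
          simpa only [Fin.cons_self_tail] using h5
        have hPx : P x = 0 := le_antisymm (by rwa [hm0] at hle) (hpos x)
        rw [hPx, hm0, zero_mul]
    set lam : ℝ := if ε = 0 then 1 else (m false - (1/2 - ε))/(2*ε) with hlam_def
    have hlam0 : 0 ≤ lam := by
      rw [hlam_def]
      split_ifs with h
      · norm_num
      · have hε' : 0 < ε := lt_of_le_of_ne hε0 (Ne.symm h)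
        have h1 := (hm_bound false).1
        apply div_nonneg <;> linarith
    have hlam1 : lam ≤ 1 := by
      rw [hlam_def]
      split_ifs with h
      · exact le_refl 1
      · have hε' : 0 < ε := lt_of_le_of_ne hε0 (Ne.symm h)
        have h2 := (hm_bound false).2
        rw [div_le_one (by linarith)]
        linarith
    have hlam_eq : m false = lam * (1/2 + ε) + (1 - lam) * (1/2 - ε) := by
      rw [hlam_def]
      split_ifs with h
      · subst h
        have h1 := (hm_bound false).1
        have h2 := (hm_bound false).2
        norm_num at h1 h2 ⊢
        linarith
      · field_simp
        ring
    have hcond : ∀ d : Bool,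
        condL (cond d (1/2 - ε) (1/2 + ε)) (cond d (1/2 + ε) (1/2 - ε)) (Q false, Q true)
          ∈ convexHull ℝ (permBern (n+1) ε) := by
      intro d
      have hprod : (Q false, Q true) ∈ convexHull ℝ (permBern n ε ×ˢ permBern n ε) := by
        rw [convexHull_prod]
        exact ⟨hQ_mem false, hQ_mem true⟩
      have himg : condL (cond d (1/2 - ε) (1/2 + ε)) (cond d (1/2 + ε) (1/2 - ε)) (Q false, Q true) ∈
          (condL (cond d (1/2 - ε) (1/2 + ε)) (cond d (1/2 + ε) (1/2 - ε))) ''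
            (convexHull ℝ (permBern n ε ×ˢ permBern n ε)) := ⟨_, hprod, rfl⟩
      rw [LinearMap.image_convexHull] at himg
      refine convexHull_mono ?_ himg
      rintro R ⟨⟨A, C⟩, ⟨hA, hC⟩, rfl⟩
      exact condL_mem ε d A C hA hC
    have hmt : m true = 1 - m false := by linarith
    have hPeq : P = lam • (condL (1/2 + ε) (1/2 - ε) (Q false, Q true)) +
        (1 - lam) • (condL (1/2 - ε) (1/2 + ε) (Q false, Q true)) := by
      funext x
      have hd := hdecomp x
      simp only [Pi.add_apply, Pi.smul_apply, smul_eq_mul, condL, LinearMap.coe_mk,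
        AddHom.coe_mk]
      rcases hx : x 0 <;> rw [hx] at hd <;> simp only [hx, if_true, if_false,
        Bool.false_eq_true, Bool.true_eq_false]
      · linear_combination hd + Q false (Fin.tail x) * hlam_eq
      · linear_combination hd + Q true (Fin.tail x) * hmt - Q true (Fin.tail x) * hlam_eq
    have h1 := hcond false
    have h2 := hcond true
    simp only [Bool.cond_false, Bool.cond_true] at h1 h2
    rw [hPeq]
    exact convex_convexHull ℝ _ h1 h2 hlam0 (by linarith) (by ring)


/-- every SV distribution with parameter ε lies in the convex hull of
the permutations of the Bernoulli distribution with parameter p₊ = 1/2 + ε. -/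
theorem sv_mem_convexHull_permuted_bernoulli
    (n : ℕ) (ε : ℝ) (hε0 : 0 ≤ ε) (hε : ε ≤ 1/2)
    (P : (Fin n → Bool) → ℝ) (hP : IsSV n ε P) :
    P ∈ convexHull ℝ {Q : (Fin n → Bool) → ℝ |
      ∃ σ : Equiv.Perm (Fin n → Bool), ∀ x, Q x = bern n ε (σ x)} :=
  sv_aux n ε hε0 hε P hP
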